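/- arXiv:1704.03625 — 3 statements merged into one kernel-verified Lean document; each statement's English description precedes it below -/
import Mathlib

section
/- For every nonnegative φ ∈ C_c^∞(Ω) one has ∫_Ω d_Γ(x)² (Δφ)(x) dx ≥ 2(d − d_H) ∫_Ω φ(x) dx, where Δφ = Σ_{k=1}^d ∂_k²φ; that is, the distributional Laplacian of d_Γ² on Ω is bounded below by 2(d − d_H). -/
open MeasureTheory Set Filter Topology Metric intervalIntegral

noncomputable section

/-- The Laplacian `Δφ = Σ_k ∂_k² φ`. -/
def lapl {d : ℕ} (φ : EuclideanSpace ℝ (Fin d) → ℝ) (x : EuclideanSpace ℝ (Fin d)) : ℝ :=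
  ∑ i, iteratedFDeriv ℝ 2 φ x (fun _ => EuclideanSpace.single i (1 : ℝ))

set_option maxHeartbeats 800000

section Aux

lemma deriv_A (ψ h : ℝ → ℝ) (hψ : ∀ t, HasDerivAt ψ (h t) t) (t : ℝ) :
    HasDerivAt (fun t => ψ t + ψ (-t) - 2 * ψ 0) (h t - h (-t)) t := by
  have h2 : HasDerivAt (fun t : ℝ => ψ (-t)) (h (-t) * -1) t :=
    (hψ (-t)).comp t (hasDerivAt_neg t)
  have := ((hψ t).add h2).sub_const (2 * ψ 0)
  simpa [mul_neg_one, sub_eq_add_neg] using this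

lemma bound1d (ψ h g : ℝ → ℝ) (hψ : ∀ t, HasDerivAt ψ (h t) t)
    (hh : ∀ t, HasDerivAt h (g t) t) (M : ℝ) (hM : ∀ t, |g t| ≤ M)
    {s : ℝ} (hs : 0 ≤ s) : |ψ s + ψ (-s) - 2 * ψ 0| ≤ 2 * M * s ^ 2 := by
  have hM0 : 0 ≤ M := le_trans (abs_nonneg _) (hM 0)
  have hhc : Continuous h := continuous_iff_continuousAt.2 fun t => (hh t).continuousAt
  have hint : IntervalIntegrable (fun t => h t - h (-t)) volume 0 s :=
    (hhc.sub (hhc.comp continuous_neg)).intervalIntegrable 0 s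
  have hftc : ∫ t in (0:ℝ)..s, (h t - h (-t)) =
      (ψ s + ψ (-s) - 2 * ψ 0) - (ψ 0 + ψ (-0) - 2 * ψ 0) :=
    intervalIntegral.integral_eq_sub_of_hasDerivAt (fun t _ => deriv_A ψ h hψ t) hint
  have hval : ψ s + ψ (-s) - 2 * ψ 0 = ∫ t in (0:ℝ)..s, (h t - h (-t)) := by
    rw [hftc]; simp; ring
  have hbnd : ∀ t ∈ Set.uIoc (0:ℝ) s, ‖h t - h (-t)‖ ≤ 2 * M * s := by
    intro t ht
    rw [Set.uIoc_of_le hs] at ht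
    have h1 : ‖h t - h (-t)‖ ≤ M * ‖t - (-t)‖ := by
      apply convex_univ.norm_image_sub_le_of_norm_hasDerivWithin_le
        (fun y _ => (hh y).hasDerivWithinAt) (fun y _ => by
          rw [Real.norm_eq_abs]; exact hM y) (Set.mem_univ _) (Set.mem_univ _)
    calc ‖h t - h (-t)‖ ≤ M * ‖t - (-t)‖ := h1
      _ = M * (2 * |t|) := by rw [Real.norm_eq_abs]; rw [show t - -t = 2*t by ring, abs_mul]; simp
      _ ≤ M * (2 * s) := by
          have : |t| ≤ s := by rw [abs_of_pos ht.1]; exact ht.2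
          nlinarith
      _ = 2 * M * s := by ring
  have := intervalIntegral.norm_integral_le_of_norm_le_const hbnd
  rw [hval, Real.norm_eq_abs] at *
  calc |∫ t in (0:ℝ)..s, (h t - h (-t))| ≤ 2 * M * s * |s - 0| := this
    _ = 2 * M * s ^ 2 := by rw [sub_zero, abs_of_nonneg hs]; ring

lemma key1d (ψ h g : ℝ → ℝ) (hψ : ∀ t, HasDerivAt ψ (h t) t)
    (hh : ∀ t, HasDerivAt h (g t) t) :
    Tendsto (fun s => (ψ s + ψ (-s) - 2 * ψ 0) / s ^ 2) (𝓝[>] 0) (𝓝 (g 0)) := by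
  have hhc : Continuous h := continuous_iff_continuousAt.2 fun t => (hh t).continuousAt
  rw [Metric.tendsto_nhdsWithin_nhds]
  intro ε hε
  have hlo : (fun t => h t - h 0 - (t - 0) • g 0) =o[𝓝 0] fun t => t - 0 :=
    hasDerivAt_iff_isLittleO.1 (hh 0)
  have hev : ∀ᶠ t in 𝓝 (0:ℝ), ‖h t - h 0 - t * g 0‖ ≤ ε / 4 * ‖t‖ := by
    have := hlo.def (by positivity : (0:ℝ) < ε / 4)
    simpa using this
  rw [Metric.eventually_nhds_iff] at hev
  obtain ⟨δ, hδ, hδ'⟩ := hev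
  refine ⟨δ, hδ, ?_⟩
  intro s hs hsδ
  have hs0 : (0:ℝ) < s := hs
  rw [Real.dist_eq] at hsδ ⊢
  rw [sub_zero] at hsδ
  have hsd : s < δ := lt_of_abs_lt hsδ
  -- FTC for A t = ψ t + ψ (-t) - 2 ψ 0 - t^2 * g 0
  have hA : ∀ t, HasDerivAt (fun t => ψ t + ψ (-t) - 2 * ψ 0 - t ^ 2 * g 0)
      (h t - h (-t) - 2 * t * g 0) t := by
    intro t
    have h1 := (deriv_A ψ h hψ t).sub (((hasDerivAt_pow 2 t)).mul_const (g 0))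
    simpa [mul_comm, Pi.sub_def] using h1
  have hint : IntervalIntegrable (fun t => h t - h (-t) - 2 * t * g 0) volume 0 s :=
    ((hhc.sub (hhc.comp continuous_neg)).sub (by continuity)).intervalIntegrable 0 s
  have hftc := intervalIntegral.integral_eq_sub_of_hasDerivAt (fun t _ => hA t) hint
  have hval : ψ s + ψ (-s) - 2 * ψ 0 - s ^ 2 * g 0
      = ∫ t in (0:ℝ)..s, (h t - h (-t) - 2 * t * g 0) := by
    rw [hftc]; simp; ring
  have hbnd : ∀ t ∈ Set.uIoc (0:ℝ) s, ‖h t - h (-t) - 2 * t * g 0‖ ≤ ε / 2 * s := by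
    intro t ht
    rw [Set.uIoc_of_le hs0.le] at ht
    have ht0 : 0 < t := ht.1
    have hts : t ≤ s := ht.2
    have h1 : ‖h t - h 0 - t * g 0‖ ≤ ε / 4 * ‖t‖ := by
      apply hδ' ; rw [Real.dist_eq, sub_zero, abs_of_pos ht0]; linarith
    have h2 : ‖h (-t) - h 0 - (-t) * g 0‖ ≤ ε / 4 * ‖-t‖ := by
      apply hδ' ; rw [Real.dist_eq, sub_zero, abs_neg, abs_of_pos ht0]; linarith
    have heq : h t - h (-t) - 2 * t * g 0
        = (h t - h 0 - t * g 0) - (h (-t) - h 0 - (-t) * g 0) := by ring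
    rw [heq]
    calc ‖(h t - h 0 - t * g 0) - (h (-t) - h 0 - (-t) * g 0)‖
        ≤ ‖h t - h 0 - t * g 0‖ + ‖h (-t) - h 0 - (-t) * g 0‖ := norm_sub_le _ _
      _ ≤ ε / 4 * ‖t‖ + ε / 4 * ‖-t‖ := add_le_add h1 h2
      _ = ε / 2 * |t| := by rw [norm_neg, Real.norm_eq_abs]; ring
      _ ≤ ε / 2 * s := by
          have : |t| ≤ s := by rw [abs_of_pos ht0]; exact hts
          nlinarith
  have hni := intervalIntegral.norm_integral_le_of_norm_le_const hbnd
  rw [← hval, Real.norm_eq_abs, sub_zero, abs_of_pos hs0] at hni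
  have hs2 : (0:ℝ) < s ^ 2 := by positivity
  have : (ψ s + ψ (-s) - 2 * ψ 0) / s ^ 2 - g 0
      = (ψ s + ψ (-s) - 2 * ψ 0 - s ^ 2 * g 0) / s ^ 2 := by field_simp
  rw [this, abs_div, abs_of_pos hs2]
  rw [div_lt_iff₀ hs2]
  calc |ψ s + ψ (-s) - 2 * ψ 0 - s ^ 2 * g 0| ≤ ε / 2 * s * s := hni
    _ = ε / 2 * s ^ 2 := by ring
    _ < ε * s ^ 2 := by nlinarith


variable {d : ℕ}
local notation "E" => EuclideanSpace ℝ (Fin d)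

lemma line_hasDerivAt (φ : E → ℝ) (hφ : ContDiff ℝ (⊤ : ℕ∞) φ) (x v : E) (t : ℝ) :
    HasDerivAt (fun t : ℝ => φ (x + t • v)) (fderiv ℝ φ (x + t • v) v) t := by
  have hc : HasDerivAt (fun t : ℝ => x + t • v) v t := by
    simpa using ((hasDerivAt_id t).smul_const v).const_add x
  exact ((hφ.differentiable (by simp) (x + t • v)).hasFDerivAt).comp_hasDerivAt t hc

lemma line_hasDerivAt2 (φ : E → ℝ) (hφ : ContDiff ℝ (⊤ : ℕ∞) φ) (x v : E) (t : ℝ) :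
    HasDerivAt (fun t : ℝ => fderiv ℝ φ (x + t • v) v)
      (fderiv ℝ (fderiv ℝ φ) (x + t • v) v v) t := by
  have hc : HasDerivAt (fun t : ℝ => x + t • v) v t := by
    simpa using ((hasDerivAt_id t).smul_const v).const_add x
  have hF : ContDiff ℝ (⊤ : ℕ∞) (fderiv ℝ φ) := hφ.fderiv_right (by simp)
  have h1 : HasDerivAt (fun t : ℝ => fderiv ℝ φ (x + t • v))
      (fderiv ℝ (fderiv ℝ φ) (x + t • v) v) t :=
    ((hF.differentiable (by simp) (x + t • v)).hasFDerivAt).comp_hasDerivAt t hc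
  have := h1.clm_apply (hasDerivAt_const t v)
  simpa using this

lemma lapl_eq (φ : E → ℝ) (hφ : ContDiff ℝ (⊤ : ℕ∞) φ) (x : E) :
    (∑ i, iteratedFDeriv ℝ 2 φ x (fun _ => EuclideanSpace.single i (1 : ℝ)))
    = ∑ i, fderiv ℝ (fderiv ℝ φ) x (EuclideanSpace.single i (1:ℝ)) (EuclideanSpace.single i (1:ℝ)) := by
  refine Finset.sum_congr rfl fun i _ => ?_
  rw [iteratedFDeriv_two_apply]



lemma sum_coord_sq (w : E) : ∑ i, w i ^ 2 = ‖w‖ ^ 2 := by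
  rw [← real_inner_self_eq_norm_sq, PiLp.inner_apply]
  simp [RCLike.inner_apply, pow_two]

lemma halfspace_bound (K : Set E) (hKne : K.Nonempty) (hKcl : IsClosed K)
    (hKconv : Convex ℝ K) {x : E} (hx : 0 < infDist x K) :
    ∃ n : E, ‖n‖ = 1 ∧ ∀ h : E, ‖h‖ ≤ infDist x K →
      2 * (inner ℝ h n : ℝ) ^ 2 ≤
        infDist (x + h) K ^ 2 + infDist (x - h) K ^ 2 - 2 * infDist x K ^ 2 := by
  have : Nonempty K := hKne.to_subtype
  obtain ⟨p, hpK, hmin⟩ := exists_norm_eq_iInf_of_complete_convex hKne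
    hKcl.isComplete hKconv x
  have hDp : infDist x K = ‖x - p‖ := by
    rw [infDist_eq_iInf]; simp only [dist_eq_norm]; exact hmin.symm
  set D := infDist x K with hD
  have hD0 : 0 < ‖x - p‖ := hDp ▸ hx
  have hvar : ∀ w ∈ K, (inner ℝ (x - p) (w - p) : ℝ) ≤ 0 :=
    (norm_eq_iInf_iff_real_inner_le_zero hKconv hpK).1 hmin
  set n : E := ‖x - p‖⁻¹ • (x - p) with hn
  have hnorm : ‖n‖ = 1 := by
    rw [hn, norm_smul, norm_inv, norm_norm, inv_mul_cancel₀ hD0.ne']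
  refine ⟨n, hnorm, ?_⟩
  intro h hh
  have ha : |(inner ℝ h n : ℝ)| ≤ D := by
    calc |(inner ℝ h n : ℝ)| ≤ ‖h‖ * ‖n‖ := abs_real_inner_le_norm _ _
      _ ≤ D := by rw [hnorm, mul_one]; exact hh
  set a : ℝ := inner ℝ h n with hadef
  have key : ∀ h' : E, 0 ≤ D + (inner ℝ h' n : ℝ) → D + (inner ℝ h' n : ℝ) ≤ infDist (x + h') K := by
    intro h' _
    rw [infDist_eq_iInf]
    refine le_ciInf fun y => ?_
    have hyK : (y : E) ∈ K := y.2
    have h1 : (inner ℝ (x + h' - (y : E)) n : ℝ) ≤ ‖x + h' - (y : E)‖ := by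
      calc (inner ℝ (x + h' - (y:E)) n : ℝ) ≤ ‖x + h' - (y:E)‖ * ‖n‖ := real_inner_le_norm _ _
        _ = ‖x + h' - (y:E)‖ := by rw [hnorm, mul_one]
    have h2 : (inner ℝ (x + h' - (y:E)) n : ℝ)
        = (inner ℝ (x - p) n : ℝ) + (inner ℝ h' n : ℝ) - (inner ℝ ((y:E) - p) n : ℝ) := by
      rw [← inner_add_left, ← inner_sub_left]
      congr 1
      abel
    have h3 : (inner ℝ (x - p) n : ℝ) = D := by
      rw [hn, real_inner_smul_right, real_inner_self_eq_norm_sq, hDp]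
      field_simp
    have h4 : (inner ℝ ((y:E) - p) n : ℝ) ≤ 0 := by
      rw [hn, real_inner_smul_right]
      have h5 : (inner ℝ ((y:E) - p) (x - p) : ℝ) ≤ 0 := by
        rw [real_inner_comm]; exact hvar _ hyK
      exact mul_nonpos_of_nonneg_of_nonpos (inv_nonneg.2 (norm_nonneg _)) h5
    rw [dist_eq_norm]
    linarith
  have hDa : 0 ≤ D + a := by cases abs_le.1 ha; linarith
  have hDa' : 0 ≤ D - a := by cases abs_le.1 ha; linarith
  have k1 : D + a ≤ infDist (x + h) K := key h (by rwa [← hadef])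
  have k2 : D - a ≤ infDist (x - h) K := by
    have := key (-h) (by rw [inner_neg_left, ← hadef]; linarith)
    rw [inner_neg_left, ← hadef] at this
    rw [sub_eq_add_neg x h]
    linarith
  have s1 : (D + a) ^ 2 ≤ infDist (x + h) K ^ 2 := by nlinarith
  have s2 : (D - a) ^ 2 ≤ infDist (x - h) K ^ 2 := by nlinarith
  nlinarith

lemma proj_bound (K : Set E) (hKne : K.Nonempty) (hKcl : IsClosed K) (hKconv : Convex ℝ K)
    (x h : E) :
    2 * ‖(Submodule.orthogonalProjectionOnto ((affineSpan ℝ K).direction)ᗮ h : E)‖ ^ 2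
      ≤ infDist (x + h) K ^ 2 + infDist (x - h) K ^ 2 - 2 * infDist x K ^ 2 := by
  set W := (affineSpan ℝ K).direction
  set Q := Submodule.orthogonalProjectionOnto Wᗮ
  obtain ⟨pp, hppK, hpp⟩ := hKcl.exists_infDist_eq_dist hKne (x + h)
  obtain ⟨pm, hpmK, hpm⟩ := hKcl.exists_infDist_eq_dist hKne (x - h)
  set u := x + h - pp
  set v := x - h - pm
  have hmid : ((1:ℝ)/2) • pp + ((1:ℝ)/2) • pm ∈ K :=
    hKconv hppK hpmK (by norm_num) (by norm_num) (by norm_num)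
  have hxK : infDist x K ≤ ‖x - (((1:ℝ)/2) • pp + ((1:ℝ)/2) • pm)‖ := by
    rw [← dist_eq_norm]; exact infDist_le_dist_of_mem hmid
  have huv : u + v = (2:ℝ) • (x - (((1:ℝ)/2) • pp + ((1:ℝ)/2) • pm)) := by
    simp only [u, v, smul_add, smul_sub, smul_smul]
    norm_num
    module
  have hQdiff : Q (pp - pm) = 0 := by
    apply Submodule.orthogonalProjectionOnto_apply_of_mem_orthogonal
    have : pp - pm ∈ W :=
      AffineSubspace.vsub_mem_direction (subset_affineSpan ℝ K hppK) (subset_affineSpan ℝ K hpmK)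
    exact Submodule.le_orthogonal_orthogonal _ this
  have hQuv : ‖(Q (u - v) : E)‖ = 2 * ‖(Q h : E)‖ := by
    have : u - v = (2:ℝ) • h - (pp - pm) := by simp only [u, v]; module
    rw [this, map_sub, _root_.map_smul, hQdiff, sub_zero]
    rw [Submodule.coe_smul, norm_smul]
    simp
  have hQle : ‖(Q (u - v) : E)‖ ≤ ‖u - v‖ := by
    have h1 : ‖Q (u - v)‖ ≤ ‖Q‖ * ‖u - v‖ := Q.le_opNorm _
    have h2 : ‖Q‖ ≤ 1 := Submodule.orthogonalProjectionOnto_norm_le _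
    have h3 : ‖(Q (u - v) : E)‖ = ‖Q (u - v)‖ := rfl
    nlinarith [norm_nonneg (u - v), norm_nonneg (Q (u - v))]
  have hpar : ‖u + v‖ * ‖u + v‖ + ‖u - v‖ * ‖u - v‖ = 2 * (‖u‖ * ‖u‖ + ‖v‖ * ‖v‖) :=
    parallelogram_law_with_norm_mul ℝ u v
  have hfp : infDist (x + h) K = ‖u‖ := by rw [hpp, dist_eq_norm]
  have hfm : infDist (x - h) K = ‖v‖ := by rw [hpm, dist_eq_norm]
  have huvn : ‖u + v‖ = 2 * ‖x - (((1:ℝ)/2) • pp + ((1:ℝ)/2) • pm)‖ := by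
    rw [huv, norm_smul]; simp
  have hx0 : 0 ≤ infDist x K := infDist_nonneg
  rw [hfp, hfm]
  nlinarith [norm_nonneg (u - v), norm_nonneg (Q (u - v) : E), norm_nonneg (x - (((1:ℝ)/2) • pp + ((1:ℝ)/2) • pm))]

lemma sum_proj_single_sq (U : Submodule ℝ (EuclideanSpace ℝ (Fin d))) :
    ∑ i, ‖(Submodule.orthogonalProjectionOnto U (EuclideanSpace.single i (1:ℝ)) : E)‖ ^ 2
      = (Module.finrank ℝ U : ℝ) := by
  set b := stdOrthonormalBasis ℝ U with hb
  have hP : ∀ w : E, ‖(Submodule.orthogonalProjectionOnto U w : E)‖ ^ 2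
      = ∑ j, (inner ℝ ((b j : E)) w : ℝ) ^ 2 := by
    intro w
    have h0 : ‖(Submodule.orthogonalProjectionOnto U w : E)‖ = ‖Submodule.orthogonalProjectionOnto U w‖ := rfl
    rw [h0, ← b.repr.norm_map (Submodule.orthogonalProjectionOnto U w), ← sum_coord_sq]
    refine Finset.sum_congr rfl fun j _ => ?_
    congr 1
    rw [b.repr_apply_apply]
    exact Submodule.inner_orthogonalProjectionOnto_eq_of_mem_left (K := U) (b j) w
  calc ∑ i, ‖(Submodule.orthogonalProjectionOnto U (EuclideanSpace.single i (1:ℝ)) : E)‖ ^ 2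
      = ∑ i, ∑ j, (inner ℝ ((b j : E)) (EuclideanSpace.single i (1:ℝ)) : ℝ) ^ 2 :=
        Finset.sum_congr rfl fun i _ => hP _
    _ = ∑ j, ∑ i, ((b j : E) i) ^ 2 := by
        rw [Finset.sum_comm]
        refine Finset.sum_congr rfl fun j _ => Finset.sum_congr rfl fun i _ => ?_
        rw [real_inner_comm, EuclideanSpace.inner_single_left]
        norm_num
    _ = ∑ j, ‖(b j : E)‖ ^ 2 := Finset.sum_congr rfl fun j _ => sum_coord_sq _
    _ = (Module.finrank ℝ U : ℝ) := by
        have : ∀ j, ‖(b j : E)‖ = 1 := fun j => by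
          have := b.orthonormal.1 j
          rwa [Submodule.norm_coe]
        simp [this, finrank_euclideanSpace_fin]

lemma geom_bound (hd : 1 ≤ d) (K : Set (EuclideanSpace ℝ (Fin d)))
    (hKne : K.Nonempty) (hKcl : IsClosed K) (hKconv : Convex ℝ K)
    (dH : ℕ) (hdH : dH = min (Module.finrank ℝ (affineSpan ℝ K).direction) (d - 1))
    {x : E} {s : ℝ} (hs : 0 < s) (hsx : s ≤ infDist x K) :
    2 * ((d : ℝ) - dH) * s ^ 2 ≤
      ∑ i, (infDist (x + s • EuclideanSpace.single i (1:ℝ)) K ^ 2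
        + infDist (x - s • EuclideanSpace.single i (1:ℝ)) K ^ 2 - 2 * infDist x K ^ 2) := by
  set W := (affineSpan ℝ K).direction with hW
  set m := Module.finrank ℝ W with hm
  have hmd : m ≤ d := by
    have := Submodule.finrank_le W
    rwa [finrank_euclideanSpace_fin] at this
  rcases lt_or_eq_of_le hmd with hlt | heq
  · -- m < d, dH = m
    have hdH' : dH = m := by rw [hdH, min_eq_left (Nat.le_sub_one_of_lt hlt)]
    have key : ∀ i, 2 * ‖(Submodule.orthogonalProjectionOnto Wᗮ (s • EuclideanSpace.single i (1:ℝ)) : E)‖ ^ 2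
        ≤ infDist (x + s • EuclideanSpace.single i (1:ℝ)) K ^ 2
          + infDist (x - s • EuclideanSpace.single i (1:ℝ)) K ^ 2 - 2 * infDist x K ^ 2 :=
      fun i => proj_bound K hKne hKcl hKconv x _
    have hsum : ∑ i, 2 * ‖(Submodule.orthogonalProjectionOnto Wᗮ (s • EuclideanSpace.single i (1:ℝ)) : E)‖ ^ 2
        = 2 * ((d : ℝ) - m) * s ^ 2 := by
      have horth : (Module.finrank ℝ Wᗮ : ℝ) = (d : ℝ) - m := by
        have := W.finrank_add_finrank_orthogonal
        rw [finrank_euclideanSpace_fin] at this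
        have : (m : ℕ) + Module.finrank ℝ Wᗮ = d := this
        push_cast [← this]
        ring
      calc ∑ i, 2 * ‖(Submodule.orthogonalProjectionOnto Wᗮ (s • EuclideanSpace.single i (1:ℝ)) : E)‖ ^ 2
          = ∑ i, 2 * s ^ 2 * ‖(Submodule.orthogonalProjectionOnto Wᗮ (EuclideanSpace.single i (1:ℝ)) : E)‖ ^ 2 := by
            refine Finset.sum_congr rfl fun i _ => ?_
            rw [_root_.map_smul]
            rw [Submodule.coe_smul, norm_smul, Real.norm_eq_abs, abs_of_pos hs]
            ring
        _ = 2 * s ^ 2 * (Module.finrank ℝ Wᗮ : ℝ) := by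
            rw [← Finset.mul_sum, sum_proj_single_sq]
        _ = 2 * ((d : ℝ) - m) * s ^ 2 := by rw [horth]; ring
    calc 2 * ((d : ℝ) - dH) * s ^ 2 = 2 * ((d:ℝ) - m) * s ^ 2 := by rw [hdH']
      _ = ∑ i, 2 * ‖(Submodule.orthogonalProjectionOnto Wᗮ (s • EuclideanSpace.single i (1:ℝ)) : E)‖ ^ 2 :=
          hsum.symm
      _ ≤ _ := Finset.sum_le_sum fun i _ => key i
  · -- m = d, dH = d - 1
    have hdH' : (dH : ℝ) = (d : ℝ) - 1 := by
      rw [hdH, heq, min_eq_right (Nat.sub_le d 1), Nat.cast_sub hd, Nat.cast_one]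
    have hx : 0 < infDist x K := lt_of_lt_of_le hs hsx
    obtain ⟨n, hn1, hbd⟩ := halfspace_bound K hKne hKcl hKconv hx
    have key : ∀ i : Fin d, 2 * (inner ℝ (s • EuclideanSpace.single i (1:ℝ)) n : ℝ) ^ 2
        ≤ infDist (x + s • EuclideanSpace.single i (1:ℝ)) K ^ 2
          + infDist (x - s • EuclideanSpace.single i (1:ℝ)) K ^ 2 - 2 * infDist x K ^ 2 := by
      intro i
      apply hbd
      rw [norm_smul, Real.norm_eq_abs, abs_of_pos hs, EuclideanSpace.norm_single]
      simpa using hsx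
    have hsum : ∑ i, 2 * (inner ℝ (s • EuclideanSpace.single i (1:ℝ)) n : ℝ) ^ 2
        = 2 * s ^ 2 := by
      have : ∀ i : Fin d, (inner ℝ (s • EuclideanSpace.single i (1:ℝ)) n : ℝ) = s * n i := by
        intro i
        rw [real_inner_smul_left, EuclideanSpace.inner_single_left]
        norm_num
      simp_rw [this, mul_pow]
      rw [← Finset.mul_sum, ← Finset.mul_sum, sum_coord_sq, hn1]
      ring
    calc 2 * ((d : ℝ) - dH) * s ^ 2 = 2 * s ^ 2 := by rw [hdH']; ring
      _ = ∑ i, 2 * (inner ℝ (s • EuclideanSpace.single i (1:ℝ)) n : ℝ) ^ 2 := hsum.symm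
      _ ≤ _ := Finset.sum_le_sum fun i _ => key i

end Aux

/-- The distributional Laplacian of `d_Γ²` on `Ω = ℝ^d \ K` is bounded below by
`2(d - d_H)` (Corollary 2.2 of the paper). -/
theorem laplacian_dist_sq_lower_bound
    (d : ℕ) (hd : 1 ≤ d) (K : Set (EuclideanSpace ℝ (Fin d)))
    (hKne : K.Nonempty) (hKcl : IsClosed K) (hKconv : Convex ℝ K)
    (hKproper : K ≠ Set.univ)
    (dH : ℕ) (hdH : dH = min (Module.finrank ℝ (affineSpan ℝ K).direction) (d - 1))
    (φ : EuclideanSpace ℝ (Fin d) → ℝ) (hφ : ContDiff ℝ (⊤ : ℕ∞) φ)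
    (hφc : HasCompactSupport φ) (hφs : tsupport φ ⊆ Kᶜ) (hφ0 : ∀ x, 0 ≤ φ x) :
    (∫ x in Kᶜ, Metric.infDist x K ^ 2 * lapl φ x)
      ≥ 2 * ((d : ℝ) - dH) * ∫ x in Kᶜ, φ x := by
  classical
  by_cases hφz : φ = (fun _ => (0:ℝ))
  · subst hφz
    simp [lapl, iteratedFDeriv_zero_fun]
  set f : EuclideanSpace ℝ (Fin d) → ℝ := fun x => infDist x K ^ 2 with hf
  set e : Fin d → EuclideanSpace ℝ (Fin d) :=
    fun i => EuclideanSpace.single i (1:ℝ) with he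
  have hfc : Continuous f := (continuous_infDist_pt K).pow 2
  have hφcont : Continuous φ := hφ.continuous
  -- reduce set integrals to full integrals
  have hL : ∫ x in Kᶜ, infDist x K ^ 2 * lapl φ x = ∫ x, f x * lapl φ x := by
    apply setIntegral_eq_integral_of_forall_compl_eq_zero
    intro x hx
    rw [notMem_compl_iff] at hx
    rw [infDist_zero_of_mem hx]
    ring
  have hR : ∫ x in Kᶜ, φ x = ∫ x, φ x := by
    apply setIntegral_eq_integral_of_forall_compl_eq_zero
    intro x hx
    rw [notMem_compl_iff] at hx
    exact image_eq_zero_of_notMem_tsupport (fun hxt => (hφs hxt) hx)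
  rw [hL, hR, ge_iff_le]
  -- second derivative data
  set A := fderiv ℝ (fderiv ℝ φ) with hA
  have hAcd : ContDiff ℝ (⊤ : ℕ∞) A := (hφ.fderiv_right (m := ((⊤ : ℕ∞) : WithTop ℕ∞)) (by simp)).fderiv_right (by simp)
  have hAc : Continuous A := hAcd.continuous
  have hAcs : HasCompactSupport A := (hφc.fderiv (𝕜 := ℝ)).fderiv (𝕜 := ℝ)
  obtain ⟨M, hM⟩ : ∃ M, ∀ x, ‖A x‖ ≤ M := HasCompactSupport.exists_bound_of_continuous (f := A) hAcs hAc
  have hM0 : 0 ≤ M := le_trans (norm_nonneg (A 0)) (hM 0)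
  have hne : ∀ i, ‖e i‖ = 1 := fun i => by
    simp [he, EuclideanSpace.norm_single]
  have hlapl : ∀ x, lapl φ x = ∑ i, A x (e i) (e i) := fun x => lapl_eq φ hφ x
  have hgbd : ∀ (x : EuclideanSpace ℝ (Fin d)) i (t : ℝ),
      |A (x + t • e i) (e i) (e i)| ≤ M := by
    intro x i t
    rw [← Real.norm_eq_abs]
    calc ‖A (x + t • e i) (e i) (e i)‖
        ≤ ‖A (x + t • e i) (e i)‖ * ‖e i‖ := (A _ (e i)).le_opNorm _
      _ ≤ ‖A (x + t • e i)‖ * ‖e i‖ * ‖e i‖ := by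
          gcongr
          exact (A _).le_opNorm _
      _ ≤ M := by rw [hne i, mul_one, mul_one]; exact hM _
  -- the three 1d functions
  have hψd : ∀ (x : EuclideanSpace ℝ (Fin d)) i (t : ℝ),
      HasDerivAt (fun t : ℝ => φ (x + t • e i)) (fderiv ℝ φ (x + t • e i) (e i)) t :=
    fun x i t => line_hasDerivAt φ hφ x (e i) t
  have hhd : ∀ (x : EuclideanSpace ℝ (Fin d)) i (t : ℝ),
      HasDerivAt (fun t : ℝ => fderiv ℝ φ (x + t • e i) (e i)) (A (x + t • e i) (e i) (e i)) t :=
    fun x i t => line_hasDerivAt2 φ hφ x (e i) t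
  -- rewrite of the symmetric difference
  have hrw : ∀ (x : EuclideanSpace ℝ (Fin d)) i (s : ℝ),
      φ (x + s • e i) + φ (x + (-s) • e i) - 2 * φ (x + (0:ℝ) • e i)
      = φ (x + s • e i) + φ (x - s • e i) - 2 * φ x := by
    intro x i s
    rw [neg_smul, ← sub_eq_add_neg, zero_smul, add_zero]
  -- compact support gadget
  set C : Set (EuclideanSpace ℝ (Fin d)) := Metric.cthickening 1 (tsupport φ) with hC
  have hCcp : IsCompact C := IsCompact.cthickening hφc
  have hCmeas : MeasurableSet C := hCcp.isClosed.measurableSet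
  obtain ⟨Cf, hCf⟩ := hCcp.exists_bound_of_continuousOn hfc.continuousOn
  set Cf' : ℝ := max Cf 0 with hCf'
  have hCf'0 : 0 ≤ Cf' := le_max_right _ _
  have hCfb : ∀ x ∈ C, |f x| ≤ Cf' := fun x hx =>
    le_trans (le_trans (le_of_eq (Real.norm_eq_abs _).symm) (hCf x hx)) (le_max_left _ _)
  set B : EuclideanSpace ℝ (Fin d) → ℝ := C.indicator (fun _ => Cf' * (2 * M)) with hB
  have hBint : Integrable B := by
    rw [hB, integrable_indicator_iff hCmeas]
    exact integrableOn_const hCcp.measure_lt_top.ne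
  -- membership facts
  have hsub : ∀ (x : EuclideanSpace ℝ (Fin d)) i (s : ℝ), s ∈ Set.Ioo (0:ℝ) 1 → x ∉ C →
      φ (x + s • e i) = 0 ∧ φ (x - s • e i) = 0 ∧ φ x = 0 := by
    intro x i s hs hxC
    refine ⟨?_, ?_, ?_⟩
    · by_contra hne0
      apply hxC
      apply mem_cthickening_of_dist_le x (x + s • e i) 1 _ (subset_tsupport φ hne0)
      rw [dist_eq_norm]
      simp only [sub_add_cancel_left]
      rw [norm_neg, norm_smul, Real.norm_eq_abs, abs_of_pos hs.1, hne i, mul_one]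
      exact hs.2.le
    · by_contra hne0
      apply hxC
      apply mem_cthickening_of_dist_le x (x - s • e i) 1 _ (subset_tsupport φ hne0)
      rw [dist_eq_norm]
      simp only [sub_sub_cancel]
      rw [norm_smul, Real.norm_eq_abs, abs_of_pos hs.1, hne i, mul_one]
      exact hs.2.le
    · by_contra hne0
      exact hxC (Metric.self_subset_cthickening _ (subset_tsupport φ hne0))
  -- continuity of the difference quotient integrand
  have hFcont : ∀ (i : Fin d) (s : ℝ), Continuous (fun x =>
      f x * ((φ (x + s • e i) + φ (x - s • e i) - 2 * φ x) / s ^ 2)) := by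
    intro i s
    apply hfc.mul
    apply Continuous.div_const
    exact ((hφcont.comp (continuous_id.add continuous_const)).add
      (hφcont.comp (continuous_id.sub continuous_const))).sub
      (continuous_const.mul hφcont)
  -- Step 1 : convergence of difference quotients
  have hmain : ∀ i : Fin d,
      Tendsto (fun s : ℝ => ∫ x, f x * ((φ (x + s • e i) + φ (x - s • e i) - 2 * φ x) / s ^ 2))
        (𝓝[>] (0:ℝ)) (𝓝 (∫ x, f x * A x (e i) (e i))) := by
    intro i
    apply tendsto_integral_filter_of_dominated_convergence B
    · exact Eventually.of_forall fun s => (hFcont i s).aestronglyMeasurable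
    · filter_upwards [Ioo_mem_nhdsGT_of_mem (Set.left_mem_Ico.2 zero_lt_one)] with s hs
      apply Eventually.of_forall
      intro x
      by_cases hxC : x ∈ C
      · rw [hB, Set.indicator_of_mem hxC]
        have hb := bound1d _ _ _ (hψd x i) (hhd x i) M (hgbd x i) hs.1.le
        rw [hrw x i s] at hb
        have hs2 : 0 < s ^ 2 := pow_pos hs.1 2
        rw [Real.norm_eq_abs, abs_mul, abs_div]
        have h2 : |φ (x + s • e i) + φ (x - s • e i) - 2 * φ x| / |s ^ 2| ≤ 2 * M := by
          rw [abs_of_pos hs2, div_le_iff₀ hs2]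
          linarith
        exact mul_le_mul (hCfb x hxC) h2 (by positivity) hCf'0
      · rw [hB, Set.indicator_of_notMem hxC]
        obtain ⟨h1, h2, h3⟩ := hsub x i s hs hxC
        rw [h1, h2, h3]
        simp
    · exact hBint
    · apply Eventually.of_forall
      intro x
      have hk := key1d _ _ _ (hψd x i) (hhd x i)
      simp only [hrw x i] at hk
      rw [show x + (0:ℝ) • e i = x by rw [zero_smul, add_zero]] at hk
      exact hk.const_mul (f x)
  -- limit identification
  have hintg : ∀ i : Fin d, Integrable (fun x => f x * A x (e i) (e i)) := by
    intro i
    apply Continuous.integrable_of_hasCompactSupport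
    · exact hfc.mul ((hAc.clm_apply continuous_const).clm_apply continuous_const)
    · apply HasCompactSupport.mul_left
      apply hAcs.mono
      intro x hx
      simp only [Function.mem_support] at hx ⊢
      intro h0
      exact hx (by rw [h0]; simp)
  have hlim : Tendsto (fun s : ℝ => ∑ i, ∫ x,
      f x * ((φ (x + s • e i) + φ (x - s • e i) - 2 * φ x) / s ^ 2))
      (𝓝[>] (0:ℝ)) (𝓝 (∫ x, f x * lapl φ x)) := by
    have heq : ∫ x, f x * lapl φ x = ∑ i, ∫ x, f x * A x (e i) (e i) := by
      rw [← integral_finset_sum _ (fun i _ => hintg i)]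
      congr 1
      ext x
      rw [hlapl x, Finset.mul_sum]
    rw [heq]
    exact tendsto_finset_sum _ (fun i _ => hmain i)
  -- Step 2 : eventual lower bound
  have hTne : (tsupport φ).Nonempty := by
    by_contra hemp
    rw [Set.not_nonempty_iff_eq_empty] at hemp
    exact hφz (funext fun x => image_eq_zero_of_notMem_tsupport (by rw [hemp]; exact notMem_empty x))
  obtain ⟨z, hzT, hzmin⟩ :=
    IsCompact.exists_isMinOn hφc hTne ((continuous_infDist_pt K).continuousOn)
  have hδpos : 0 < infDist z K :=
    (hKcl.notMem_iff_infDist_pos hKne).1 (hφs hzT)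
  set δ : ℝ := infDist z K with hδ
  have hδ1 : 0 < min δ 1 := lt_min hδpos zero_lt_one
  -- integrability helpers
  have hcsmul : ∀ g : EuclideanSpace ℝ (Fin d) → ℝ, Continuous g →
      Integrable (fun x => g x * φ x) := by
    intro g hg
    exact (hg.mul hφcont).integrable_of_hasCompactSupport hφc.mul_left
  have hcsmul2 : ∀ a : EuclideanSpace ℝ (Fin d), Integrable (fun x => f x * φ (x + a)) := by
    intro a
    apply Continuous.integrable_of_hasCompactSupport
      (hfc.mul (hφcont.comp (continuous_id.add continuous_const)))
    exact (hφc.comp_homeomorph (Homeomorph.addRight a)).mul_left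
  have hfca : ∀ a : EuclideanSpace ℝ (Fin d), Continuous (fun x => f (x + a)) :=
    fun a => hfc.comp (continuous_id.add continuous_const)
  have hfcs : ∀ a : EuclideanSpace ℝ (Fin d), Continuous (fun x => f (x - a)) :=
    fun a => hfc.comp (continuous_id.sub continuous_const)
  -- Step 2 : eventual lower bound
  have hstep2 : ∀ᶠ s in 𝓝[>] (0:ℝ),
      2 * ((d:ℝ) - dH) * ∫ x, φ x ≤ ∑ i, ∫ x,
        f x * ((φ (x + s • e i) + φ (x - s • e i) - 2 * φ x) / s ^ 2) := by
    filter_upwards [Ioo_mem_nhdsGT_of_mem (Set.left_mem_Ico.2 hδ1)] with s hs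
    have hs0 : 0 < s := hs.1
    have hs2 : 0 < s ^ 2 := pow_pos hs0 2
    have htrans : ∀ i : Fin d,
        ∫ x, f x * ((φ (x + s • e i) + φ (x - s • e i) - 2 * φ x) / s ^ 2)
        = (∫ x, (f (x - s • e i) + f (x + s • e i) - 2 * f x) * φ x) / s ^ 2 := by
      intro i
      set a := s • e i with ha
      have h1 : (fun x => f x * ((φ (x + a) + φ (x - a) - 2 * φ x) / s ^ 2))
          = fun x => (f x * φ (x + a) + f x * φ (x - a) - 2 * (f x * φ x)) / s ^ 2 := by
        funext x; ring
      rw [h1, MeasureTheory.integral_div]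
      congr 1
      have i1 : Integrable (fun x => f x * φ (x + a)) := hcsmul2 a
      have i2 : Integrable (fun x => f x * φ (x - a)) := by
        have := hcsmul2 (-a)
        simpa [sub_eq_add_neg] using this
      have i3 : Integrable (fun x => 2 * (f x * φ x)) := (hcsmul f hfc).const_mul 2
      have i12 : Integrable (fun x => f x * φ (x + a) + f x * φ (x - a)) := i1.add i2
      have hsplit : ∫ x, (f x * φ (x + a) + f x * φ (x - a) - 2 * (f x * φ x))
          = (∫ x, f x * φ (x + a)) + (∫ x, f x * φ (x - a)) - ∫ x, 2 * (f x * φ x) := by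
        rw [MeasureTheory.integral_sub i12 i3, MeasureTheory.integral_add i1 i2]
      rw [hsplit]
      have t1 : ∫ x, f x * φ (x + a) = ∫ x, f (x - a) * φ x := by
        have := integral_add_right_eq_self (μ := volume) (fun x => f (x - a) * φ x) a
        simp only [add_sub_cancel_right] at this
        exact this
      have t2 : ∫ x, f x * φ (x - a) = ∫ x, f (x + a) * φ x := by
        have := integral_add_right_eq_self (μ := volume) (fun x => f (x + a) * φ x) (-a)
        simp only [neg_add_cancel_right] at this
        simp only [← sub_eq_add_neg] at this
        exact this
      have t3 : ∫ x, 2 * (f x * φ x) = ∫ x, 2 * f x * φ x := by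
        congr 1; funext x; ring
      rw [t1, t2, t3]
      have j1 : Integrable (fun x => f (x - a) * φ x) := hcsmul _ (hfcs a)
      have j2 : Integrable (fun x => f (x + a) * φ x) := hcsmul _ (hfca a)
      have j3 : Integrable (fun x => 2 * f x * φ x) :=
        hcsmul _ (continuous_const.mul hfc)
      have j12 : Integrable (fun x => f (x - a) * φ x + f (x + a) * φ x) := j1.add j2
      rw [← MeasureTheory.integral_add j1 j2, ← MeasureTheory.integral_sub j12 j3]
      congr 1; funext x; ring
    have hsum : ∑ i, ∫ x, f x * ((φ (x + s • e i) + φ (x - s • e i) - 2 * φ x) / s ^ 2)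
        = (∫ x, (∑ i, (f (x - s • e i) + f (x + s • e i) - 2 * f x)) * φ x) / s ^ 2 := by
      rw [Finset.sum_congr rfl (fun i _ => htrans i), ← Finset.sum_div]
      congr 1
      rw [← integral_finset_sum _ (fun i _ => hcsmul (fun x => f (x - s • e i) + f (x + s • e i) - 2 * f x)
        (((hfcs _).add (hfca _)).sub (continuous_const.mul hfc)))]
      congr 1; funext x
      rw [← Finset.sum_mul]
    rw [hsum, le_div_iff₀ hs2]
    have hlhs : 2 * ((d:ℝ) - dH) * (∫ x, φ x) * s ^ 2
        = ∫ x, (2 * ((d:ℝ) - dH) * s ^ 2) * φ x := by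
      rw [MeasureTheory.integral_const_mul]; ring
    rw [hlhs]
    apply MeasureTheory.integral_mono
    · exact (hcsmul _ continuous_const)
    · exact hcsmul _ (continuous_finset_sum Finset.univ (fun i _ =>
        ((hfcs _).add (hfca _)).sub (continuous_const.mul hfc)))
    intro x
    by_cases hx0 : φ x = 0
    · simp [hx0]
    · have hxT : x ∈ tsupport φ := subset_tsupport φ (by simpa [Function.mem_support] using hx0)
      have hsx : s ≤ infDist x K := by
        have h1 : δ ≤ infDist x K := hzmin hxT
        have h2 : s < δ := lt_of_lt_of_le hs.2 (min_le_left _ _)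
        linarith
      have hgeo := geom_bound hd K hKne hKcl hKconv dH hdH hs0 hsx
      have hq : 2 * ((d:ℝ) - dH) * s ^ 2 ≤ ∑ i, (f (x - s • e i) + f (x + s • e i) - 2 * f x) := by
        refine le_trans hgeo (le_of_eq ?_)
        refine Finset.sum_congr rfl fun i _ => ?_
        simp only [hf, he]
        ring
      exact mul_le_mul_of_nonneg_right hq (hφ0 x)
  exact ge_of_tendsto hlim hstep2
end
end

section
/- Let d be a positive integer, d_H ∈ {0,1,…,d−1}, p > 1 and δ, δ' ∈ [0,2). Set α_p = (2−δ)(p−1), α'_p = (2−δ')(p−1) and b_{α_p} = (d − d_H + min(δ,δ'))·min(α_p,α'_p) − max(α_p,α'_p)·(max(α_p,α'_p) + 2). If (d − d_H + p·min(δ,δ') − 2p)(2 − max(δ,δ')) > 2p|δ − δ'|, then b_{α_p} > 0. -/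
/-- Positivity criterion for `b_{α_p}` (Lemma 3.3 of the paper). -/
theorem b_alpha_p_pos
    (d dH : ℕ) (hd : 1 ≤ d) (hdH : dH ≤ d - 1)
    (p δ δ' : ℝ) (hp : 1 < p)
    (hδ0 : 0 ≤ δ) (hδ2 : δ < 2) (hδ'0 : 0 ≤ δ') (hδ'2 : δ' < 2)
    (h : ((d : ℝ) - dH + p * min δ δ' - 2 * p) * (2 - max δ δ') > 2 * p * |δ - δ'|) :
    0 < ((d : ℝ) - dH + min δ δ') * min ((2 - δ) * (p - 1)) ((2 - δ') * (p - 1)) -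
        max ((2 - δ) * (p - 1)) ((2 - δ') * (p - 1)) *
          (max ((2 - δ) * (p - 1)) ((2 - δ') * (p - 1)) + 2) := by
  have hD : (1:ℝ) ≤ (d:ℝ) - dH := by
    have h1 : dH + 1 ≤ d := by omega
    have h2 : ((dH : ℝ) + 1) ≤ (d : ℝ) := by exact_mod_cast h1
    linarith
  rcases le_total δ δ' with hle | hle
  · rw [min_eq_left hle, max_eq_right hle, abs_of_nonpos (by linarith)] at h
    have h1 : (2 - δ') * (p - 1) ≤ (2 - δ) * (p - 1) := by nlinarith
    rw [min_eq_left hle, min_eq_right h1, max_eq_left h1]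
    have key : ((d:ℝ) - dH + δ) * (2 - δ') - (2 - δ) * (p * (2 - δ) + δ) > 0 := by
      nlinarith [mul_nonneg (mul_nonneg hδ0 (sub_nonneg.mpr hle)) (le_of_lt (sub_pos.mpr hp))]
    nlinarith [mul_pos (sub_pos.mpr hp) key]
  · rw [min_eq_right hle, max_eq_left hle, abs_of_nonneg (by linarith)] at h
    have h1 : (2 - δ) * (p - 1) ≤ (2 - δ') * (p - 1) := by nlinarith
    rw [min_eq_right hle, min_eq_left h1, max_eq_right h1]
    have key : ((d:ℝ) - dH + δ') * (2 - δ) - (2 - δ') * (p * (2 - δ') + δ') > 0 := by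
      nlinarith [mul_nonneg (mul_nonneg hδ'0 (sub_nonneg.mpr hle)) (le_of_lt (sub_pos.mpr hp))]
    nlinarith [mul_pos (sub_pos.mpr hp) key]
end

section
/- Assume the weight is c(s) = s^δ with δ ≥ 0 (i.e. c_Ω = d_Γ^δ). Then for every p > 1, every β ≥ 0, every λ ∈ (0,1) and every nonzero φ ∈ C_c^1(Ω), the optimal Hardy constant satisfies μ_p(Ω) ≤ (1−λ)^{−(p−1)} |(β + δ − p)/p|^p + λ^{−(p−1)} (∫_Ω d_Γ^{−β+p} |∇φ|^p)/(∫_Ω d_Γ^{−β} |φ|^p). -/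
open MeasureTheory Set Metric
open scoped RealInnerProductSpace

noncomputable section

namespace HardyAux

variable {E : Type*} [NormedAddCommGroup E] [InnerProductSpace ℝ E] [ProperSpace E]

lemma exists_proj (K : Set E) (hKne : K.Nonempty) (hKcl : IsClosed K) (hKconv : Convex ℝ K)
    (x : E) : ∃ y ∈ K, infDist x K = dist x y ∧ ∀ w ∈ K, inner ℝ (x - y) (w - y) ≤ (0:ℝ) := by
  obtain ⟨y, hy, hdy⟩ := hKcl.exists_infDist_eq_dist hKne x
  refine ⟨y, hy, hdy, ?_⟩
  haveI : Nonempty K := hKne.to_subtype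
  rw [← norm_eq_iInf_iff_real_inner_le_zero hKconv hy]
  apply le_antisymm
  · exact le_ciInf fun w => by
      rw [← dist_eq_norm, ← dist_eq_norm, ← hdy]
      exact infDist_le_dist_of_mem w.2
  · have hbdd : BddBelow (Set.range fun w : K => ‖x - (w : E)‖) :=
      ⟨0, Set.forall_mem_range.2 fun _ => norm_nonneg _⟩
    exact ciInf_le hbdd ⟨y, hy⟩

variable (K : Set E) (hKne : K.Nonempty) (hKcl : IsClosed K) (hKconv : Convex ℝ K)

def proj : E → E := fun x => (exists_proj K hKne hKcl hKconv x).choose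

lemma proj_mem (x : E) : proj K hKne hKcl hKconv x ∈ K :=
  (exists_proj K hKne hKcl hKconv x).choose_spec.1

lemma infDist_eq_dist_proj (x : E) : infDist x K = dist x (proj K hKne hKcl hKconv x) :=
  (exists_proj K hKne hKcl hKconv x).choose_spec.2.1

lemma inner_proj_le (x : E) : ∀ w ∈ K,
    inner ℝ (x - proj K hKne hKcl hKconv x) (w - proj K hKne hKcl hKconv x) ≤ (0:ℝ) :=
  (exists_proj K hKne hKcl hKconv x).choose_spec.2.2

lemma proj_lipschitz : LipschitzWith 1 (proj K hKne hKcl hKconv) := by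
  set P := proj K hKne hKcl hKconv with hP
  apply LipschitzWith.of_dist_le_mul
  intro x z
  rcases eq_or_ne (P x) (P z) with h | h
  · simp [h, dist_nonneg]
  have h1 : inner ℝ (x - P x) (P z - P x) ≤ (0:ℝ) :=
    inner_proj_le K hKne hKcl hKconv x _ (proj_mem K hKne hKcl hKconv z)
  have h2 : inner ℝ (z - P z) (P x - P z) ≤ (0:ℝ) :=
    inner_proj_le K hKne hKcl hKconv z _ (proj_mem K hKne hKcl hKconv x)
  have key : ‖P x - P z‖ ^ 2 ≤ inner ℝ (x - z) (P x - P z) := by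
    have e1 : inner ℝ (P x - x) (P x - P z) ≤ (0:ℝ) := by
      have := h1
      rwa [show P z - P x = -(P x - P z) by abel, inner_neg_right,
        neg_nonpos, ← neg_nonpos, ← inner_neg_left, neg_sub] at this
    have e2 := h2
    have expand : (inner ℝ (P x - P z) (P x - P z) : ℝ)
        = inner ℝ (P x - x) (P x - P z) + inner ℝ (x - z) (P x - P z)
          + inner ℝ (z - P z) (P x - P z) := by
      rw [← inner_add_left, ← inner_add_left]
      congr 1
      abel
    have hsq : (inner ℝ (P x - P z) (P x - P z) : ℝ) = ‖P x - P z‖ ^ 2 :=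
      real_inner_self_eq_norm_sq _
    linarith [expand, e1, e2, hsq]
  have hle : inner ℝ (x - z) (P x - P z) ≤ ‖x - z‖ * ‖P x - P z‖ := real_inner_le_norm _ _
  have hpos : (0:ℝ) < ‖P x - P z‖ := by
    rw [norm_pos_iff]
    exact sub_ne_zero.2 h
  rw [dist_eq_norm, dist_eq_norm, NNReal.coe_one, one_mul]
  nlinarith [key, hle, hpos]

lemma sq_est (x z : E) :
    |infDist z K ^ 2 - infDist x K ^ 2
      - 2 * inner ℝ (x - proj K hKne hKcl hKconv x) (z - x)| ≤ 5 * ‖z - x‖ ^ 2 := by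
  set P := proj K hKne hKcl hKconv with hP
  have hfx : infDist x K ^ 2 = ‖x - P x‖ ^ 2 := by
    rw [infDist_eq_dist_proj K hKne hKcl hKconv x, dist_eq_norm]
  have hfz : infDist z K ^ 2 = ‖z - P z‖ ^ 2 := by
    rw [infDist_eq_dist_proj K hKne hKcl hKconv z, dist_eq_norm]
  have hup : infDist z K ^ 2 ≤ ‖x - P x‖ ^ 2 + 2 * inner ℝ (x - P x) (z - x) + ‖z - x‖ ^ 2 := by
    have h1 : infDist z K ≤ ‖z - P x‖ := by
      rw [← dist_eq_norm]
      exact infDist_le_dist_of_mem (proj_mem K hKne hKcl hKconv x)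
    have h2 : infDist z K ^ 2 ≤ ‖z - P x‖ ^ 2 :=
      pow_le_pow_left₀ infDist_nonneg h1 2
    have h3 : ‖z - P x‖ ^ 2 = ‖x - P x‖ ^ 2 + 2 * inner ℝ (x - P x) (z - x) + ‖z - x‖ ^ 2 := by
      have : z - P x = (x - P x) + (z - x) := by abel
      rw [this, @norm_add_sq_real]
    linarith
  have hlow : infDist x K ^ 2 ≤ infDist z K ^ 2 + 2 * inner ℝ (z - P z) (x - z) + ‖x - z‖ ^ 2 := by
    have h1 : infDist x K ≤ ‖x - P z‖ := by
      rw [← dist_eq_norm]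
      exact infDist_le_dist_of_mem (proj_mem K hKne hKcl hKconv z)
    have h2 : infDist x K ^ 2 ≤ ‖x - P z‖ ^ 2 :=
      pow_le_pow_left₀ infDist_nonneg h1 2
    have h3 : ‖x - P z‖ ^ 2 = ‖z - P z‖ ^ 2 + 2 * inner ℝ (z - P z) (x - z) + ‖x - z‖ ^ 2 := by
      have : x - P z = (z - P z) + (x - z) := by abel
      rw [this, @norm_add_sq_real]
    rw [hfz]
    linarith
  have herr : |(inner ℝ (z - P z) (z - x) : ℝ) - inner ℝ (x - P x) (z - x)| ≤ 2 * ‖z - x‖ ^ 2 := by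
    have h1 : (inner ℝ (z - P z) (z - x) : ℝ) - inner ℝ (x - P x) (z - x)
        = inner ℝ ((z - P z) - (x - P x)) (z - x) := by
      simp [inner_sub_left]
    rw [h1]
    have h2 : |(inner ℝ ((z - P z) - (x - P x)) (z - x) : ℝ)|
        ≤ ‖(z - P z) - (x - P x)‖ * ‖z - x‖ := abs_real_inner_le_norm _ _
    have h3 : ‖(z - P z) - (x - P x)‖ ≤ ‖z - x‖ + ‖P z - P x‖ := by
      have : (z - P z) - (x - P x) = (z - x) - (P z - P x) := by abel
      rw [this]
      exact norm_sub_le _ _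
    have h4 : ‖P z - P x‖ ≤ ‖z - x‖ := by
      have := (proj_lipschitz K hKne hKcl hKconv).dist_le_mul z x
      rwa [NNReal.coe_one, one_mul, dist_eq_norm, dist_eq_norm] at this
    have h5 : ‖(z - P z) - (x - P x)‖ * ‖z - x‖ ≤ (2 * ‖z - x‖) * ‖z - x‖ := by
      apply mul_le_mul_of_nonneg_right _ (norm_nonneg _)
      linarith
    calc |(inner ℝ ((z - P z) - (x - P x)) (z - x) : ℝ)|
        ≤ ‖(z - P z) - (x - P x)‖ * ‖z - x‖ := h2
      _ ≤ (2 * ‖z - x‖) * ‖z - x‖ := h5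
      _ = 2 * ‖z - x‖ ^ 2 := by ring
  have hxz : ‖x - z‖ = ‖z - x‖ := norm_sub_rev _ _
  have hinner : (inner ℝ (z - P z) (x - z) : ℝ) = - inner ℝ (z - P z) (z - x) := by
    rw [show x - z = -(z - x) by abel, inner_neg_right]
  rw [abs_le]
  constructor
  · have := hlow
    rw [hinner, hxz] at this
    have h6 : -(2 * ‖z - x‖ ^ 2) ≤ (inner ℝ (z - P z) (z - x) : ℝ) - inner ℝ (x - P x) (z - x) :=
      neg_le_of_abs_le herr
    nlinarith [this, h6]
  · rw [hfx]
    nlinarith [hup, sq_nonneg ‖z - x‖]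

lemma hasFDerivAt_sq_infDist (x : E) :
    HasFDerivAt (fun z : E => infDist z K ^ 2)
      ((2:ℝ) • innerSL ℝ (x - proj K hKne hKcl hKconv x)) x := by
  set P := proj K hKne hKcl hKconv with hP
  rw [hasFDerivAt_iff_isLittleO_nhds_zero]
  rw [Asymptotics.isLittleO_iff]
  intro c hc
  have h5 : (0:ℝ) < c / 5 := by linarith
  filter_upwards [Metric.ball_mem_nhds (0:E) h5] with h hh
  have hest := sq_est K hKne hKcl hKconv x (x + h)
  have hzx : x + h - x = h := by abel
  rw [hzx] at hest
  have hL : ((2:ℝ) • innerSL ℝ (x - P x)) h = 2 * inner ℝ (x - P x) h := by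
    simp
    rw [inner_sub_left]
  rw [Real.norm_eq_abs]
  have habs : |infDist (x + h) K ^ 2 - infDist x K ^ 2 - ((2:ℝ) • innerSL ℝ (x - P x)) h|
      ≤ 5 * ‖h‖ ^ 2 := by
    rw [hL]
    exact hest
  have hnorm : ‖h‖ < c / 5 := by
    rw [Metric.mem_ball, dist_zero_right] at hh
    exact hh
  calc |infDist (x + h) K ^ 2 - infDist x K ^ 2 - ((2:ℝ) • innerSL ℝ (x - P x)) h|
      ≤ 5 * ‖h‖ ^ 2 := habs
    _ = (5 * ‖h‖) * ‖h‖ := by ring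
    _ ≤ c * ‖h‖ := by
        apply mul_le_mul_of_nonneg_right _ (norm_nonneg _)
        nlinarith [norm_nonneg h]

include hKne hKcl hKconv in
lemma contDiff_sq_infDist : ContDiff ℝ 1 (fun z : E => infDist z K ^ 2) := by
  rw [contDiff_one_iff_fderiv]
  have hdiff : ∀ x : E, HasFDerivAt (fun z : E => infDist z K ^ 2)
      ((2:ℝ) • innerSL ℝ (x - proj K hKne hKcl hKconv x)) x :=
    hasFDerivAt_sq_infDist K hKne hKcl hKconv
  refine ⟨fun x => (hdiff x).differentiableAt, ?_⟩
  have heq : (fderiv ℝ fun z : E => infDist z K ^ 2)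
      = fun x : E => (2:ℝ) • innerSL ℝ (x - proj K hKne hKcl hKconv x) :=
    funext fun x => (hdiff x).fderiv
  rw [heq]
  exact (((innerSL ℝ (E := E)).continuous).comp
    (continuous_id.sub (proj_lipschitz K hKne hKcl hKconv).continuous)).const_smul (2:ℝ)

include hKne hKcl hKconv in
lemma contDiffAt_infDist {x : E} (hx : x ∉ K) :
    ContDiffAt ℝ 1 (fun z : E => infDist z K) x := by
  have hpos : 0 < infDist x K := by
    rw [← hKcl.notMem_iff_infDist_pos hKne]
    exact hx
  have h1 : (fun z : E => infDist z K) = fun z : E => Real.sqrt (infDist z K ^ 2) :=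
    funext fun z => (Real.sqrt_sq infDist_nonneg).symm
  rw [h1]
  exact (Real.contDiffAt_sqrt (by positivity)).comp x
    (contDiff_sq_infDist K hKne hKcl hKconv).contDiffAt

lemma add_rpow_le_convex {p lam : ℝ} (hp : 1 ≤ p) (h0 : 0 < lam) (h1 : lam < 1)
    {a b : ℝ} (ha : 0 ≤ a) (hb : 0 ≤ b) :
    (a + b) ^ p ≤ (1 - lam) ^ (1 - p) * a ^ p + lam ^ (1 - p) * b ^ p := by
  have h1l : (0:ℝ) < 1 - lam := by linarith
  have hc := (convexOn_rpow hp).2 (mem_Ici.2 (div_nonneg ha h1l.le))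
    (mem_Ici.2 (div_nonneg hb h0.le)) h1l.le h0.le (by ring)
  simp only [smul_eq_mul] at hc
  have hab : (1 - lam) * (a / (1 - lam)) + lam * (b / lam) = a + b := by
    field_simp
  rw [hab] at hc
  have hda : (a / (1 - lam)) ^ p = a ^ p / (1 - lam) ^ p := Real.div_rpow ha h1l.le p
  have hdb : (b / lam) ^ p = b ^ p / lam ^ p := Real.div_rpow hb h0.le p
  rw [hda, hdb] at hc
  have e1 : (1 - lam) * (a ^ p / (1 - lam) ^ p) = (1 - lam) ^ (1 - p) * a ^ p := by
    rw [Real.rpow_sub h1l, Real.rpow_one]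
    field_simp
  have e2 : lam * (b ^ p / lam ^ p) = lam ^ (1 - p) * b ^ p := by
    rw [Real.rpow_sub h0, Real.rpow_one]
    field_simp
  rw [e1, e2] at hc
  exact hc

open Topology in
lemma continuous_weight {n : ℕ} (K : Set (EuclideanSpace ℝ (Fin n))) (hKne : K.Nonempty)
    (hKcl : IsClosed K) (γ : ℝ) (h : EuclideanSpace ℝ (Fin n) → ℝ) (hh : Continuous h)
    (hhs : tsupport h ⊆ Kᶜ) :
    Continuous fun x => infDist x K ^ γ * h x := by
  rw [continuous_iff_continuousAt]
  intro x
  by_cases hx : x ∈ tsupport h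
  · have hd0 : infDist x K ≠ 0 :=
      ne_of_gt ((hKcl.notMem_iff_infDist_pos hKne).1 (hhs hx))
    exact (ContinuousAt.rpow_const
      ((lipschitz_infDist_pt K).continuous.continuousAt) (Or.inl hd0)).mul hh.continuousAt
  · have hev : ∀ᶠ y in 𝓝 x, (0:ℝ) = infDist y K ^ γ * h y := by
      filter_upwards [(isClosed_tsupport h).isOpen_compl.mem_nhds hx] with y hy
      simp [image_eq_zero_of_notMem_tsupport hy]
    exact continuousAt_const.congr hev

open Topology in
lemma integrable_weight {n : ℕ} (K : Set (EuclideanSpace ℝ (Fin n))) (hKne : K.Nonempty)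
    (hKcl : IsClosed K) (γ : ℝ) (h : EuclideanSpace ℝ (Fin n) → ℝ) (hh : Continuous h)
    (hhc : HasCompactSupport h) (hhs : tsupport h ⊆ Kᶜ) :
    Integrable (fun x => infDist x K ^ γ * h x) := by
  have hcont : Continuous fun x => infDist x K ^ γ * h x :=
    continuous_weight K hKne hKcl γ h hh hhs
  have hsupp : HasCompactSupport fun x => infDist x K ^ γ * h x := by
    apply hhc.mono
    intro x hx
    simp only [Function.mem_support] at hx ⊢
    intro h0
    exact hx (by rw [h0, mul_zero])
  exact hcont.integrable_of_hasCompactSupport hsupp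

end HardyAux

open HardyAux Topology

/-- Upper bound for the optimal Hardy constant with weight `d_Γ^δ`
(Lemma 4.3 of the paper, after Ward). -/
theorem hardy_constant_upper_bound_lemma
    (d : ℕ) (hd : 1 ≤ d) (K : Set (EuclideanSpace ℝ (Fin d)))
    (hKne : K.Nonempty) (hKcl : IsClosed K) (hKconv : Convex ℝ K)
    (hKproper : K ≠ Set.univ)
    (p δ : ℝ) (hp : 1 < p) (hδ : 0 ≤ δ)
    (β : ℝ) (hβ : 0 ≤ β) (lam : ℝ) (hlam0 : 0 < lam) (hlam1 : lam < 1)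
    (φ : EuclideanSpace ℝ (Fin d) → ℝ) (hφ : ContDiff ℝ 1 φ)
    (hφc : HasCompactSupport φ) (hφs : tsupport φ ⊆ Kᶜ) (hφ0 : φ ≠ 0) :
    sInf { r : ℝ | ∃ ψ : EuclideanSpace ℝ (Fin d) → ℝ,
        ContDiff ℝ 1 ψ ∧ HasCompactSupport ψ ∧ tsupport ψ ⊆ Kᶜ ∧ ψ ≠ 0 ∧
        r = (∫ x in Kᶜ, Metric.infDist x K ^ δ * ‖gradient ψ x‖ ^ p) /
            (∫ x in Kᶜ, Metric.infDist x K ^ (δ - p) * |ψ x| ^ p) }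
      ≤ (1 - lam) ^ (-(p - 1)) * |(β + δ - p) / p| ^ p +
        lam ^ (-(p - 1)) *
          ((∫ x in Kᶜ, Metric.infDist x K ^ (-β + p) * ‖gradient φ x‖ ^ p) /
           (∫ x in Kᶜ, Metric.infDist x K ^ (-β) * |φ x| ^ p)) := by
  classical
  have hp0 : (0:ℝ) < p := by linarith
  set dd : EuclideanSpace ℝ (Fin d) → ℝ := fun x => infDist x K with hdd
  set α : ℝ := (p - β - δ) / p with hα
  set ψ : EuclideanSpace ℝ (Fin d) → ℝ := fun x => dd x ^ α * φ x with hψ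
  have hmeas : MeasurableSet Kᶜ := hKcl.measurableSet.compl
  have hdpos : ∀ x : EuclideanSpace ℝ (Fin d), x ∈ Kᶜ → 0 < dd x := fun x hx =>
    (hKcl.notMem_iff_infDist_pos hKne).1 hx
  have hαp : α * p = p - β - δ := by
    rw [hα]
    field_simp
  have he1 : δ + (α - 1) * p = -β := by
    have : (α - 1) * p = α * p - p := by ring
    rw [this, hαp]; ring
  have he2 : δ + α * p = -β + p := by rw [hαp]; ring
  have he3 : δ - p + α * p = -β := by rw [hαp]; ring
  -- continuity of the gradient of φ
  have hφd : Differentiable ℝ φ := hφ.differentiable one_ne_zero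
  -- ψ is C¹
  have hψc1 : ContDiff ℝ 1 ψ := by
    rw [contDiff_iff_contDiffAt]
    intro x
    by_cases hx : x ∈ tsupport φ
    · have hxK : x ∈ Kᶜ := hφs hx
      have hdx : dd x ≠ 0 := (hdpos x hxK).ne'
      exact ((contDiffAt_infDist K hKne hKcl hKconv hxK).rpow_const_of_ne hdx).mul hφ.contDiffAt
    · have hev : ψ =ᶠ[𝓝 x] fun _ => (0:ℝ) := by
        filter_upwards [(isClosed_tsupport φ).isOpen_compl.mem_nhds hx] with y hy
        simp [hψ, image_eq_zero_of_notMem_tsupport hy]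
      exact contDiffAt_const.congr_of_eventuallyEq hev
  -- support facts
  have hsupp : Function.support ψ ⊆ Function.support φ := by
    intro x hx
    simp only [Function.mem_support] at hx ⊢
    intro h0
    exact hx (by simp [hψ, h0])
  have hψcs : HasCompactSupport ψ := hφc.mono hsupp
  have hψts : tsupport ψ ⊆ Kᶜ :=
    subset_trans (closure_mono hsupp) hφs
  have hψ0 : ψ ≠ 0 := by
    obtain ⟨x0, hx0⟩ := Function.ne_iff.1 hφ0
    simp only [Pi.zero_apply] at hx0
    have hx0K : x0 ∈ Kᶜ := hφs (subset_closure (Function.mem_support.2 hx0))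
    have : ψ x0 ≠ 0 := by
      simp only [hψ]
      exact mul_ne_zero (ne_of_gt (Real.rpow_pos_of_pos (hdpos x0 hx0K) α)) hx0
    intro h
    exact this (by rw [h]; rfl)
  -- gradient norm identities
  have hgradnorm : ∀ (f : EuclideanSpace ℝ (Fin d) → ℝ) (x : EuclideanSpace ℝ (Fin d)), ‖gradient f x‖ = ‖fderiv ℝ f x‖ := by
    intro f x
    rw [gradient]
    exact LinearIsometryEquiv.norm_map _ _
  -- gradient bound on Kᶜ
  have hgrad_le : ∀ x ∈ Kᶜ, ‖gradient ψ x‖ ≤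
      |α| * dd x ^ (α - 1) * |φ x| + dd x ^ α * ‖gradient φ x‖ := by
    intro x hx
    have hdx : 0 < dd x := hdpos x hx
    have hcd : ContDiffAt ℝ 1 dd x := contDiffAt_infDist K hKne hKcl hKconv hx
    have hD : HasFDerivAt dd (fderiv ℝ dd x) x :=
      (hcd.differentiableAt one_ne_zero).hasFDerivAt
    have hDle : ‖fderiv ℝ dd x‖ ≤ 1 := by
      have := hD.le_of_lipschitz (lipschitz_infDist_pt K)
      simpa using this
    have h1 : HasFDerivAt (fun z => dd z ^ α) ((α * dd x ^ (α - 1)) • fderiv ℝ dd x) x :=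
      hD.rpow_const (Or.inl hdx.ne')
    have hφ' : HasFDerivAt φ (fderiv ℝ φ x) x := (hφd x).hasFDerivAt
    have h2 : HasFDerivAt ψ
        (dd x ^ α • fderiv ℝ φ x + φ x • ((α * dd x ^ (α - 1)) • fderiv ℝ dd x)) x :=
      h1.mul hφ'
    rw [hgradnorm ψ x, h2.fderiv]
    have hrnn : 0 ≤ dd x ^ α := (Real.rpow_pos_of_pos hdx α).le
    have hrnn1 : 0 ≤ dd x ^ (α - 1) := (Real.rpow_pos_of_pos hdx (α - 1)).le
    calc ‖dd x ^ α • fderiv ℝ φ x + φ x • ((α * dd x ^ (α - 1)) • fderiv ℝ dd x)‖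
        ≤ ‖dd x ^ α • fderiv ℝ φ x‖ + ‖φ x • ((α * dd x ^ (α - 1)) • fderiv ℝ dd x)‖ :=
          norm_add_le _ _
      _ ≤ dd x ^ α * ‖fderiv ℝ φ x‖ + |φ x| * (|α| * dd x ^ (α - 1) * ‖fderiv ℝ dd x‖) := by
          rw [norm_smul, norm_smul, norm_smul]
          simp only [Real.norm_eq_abs, abs_of_nonneg hrnn, abs_mul, abs_of_nonneg hrnn1]
          apply add_le_add_right
          rw [mul_assoc]
      _ ≤ dd x ^ α * ‖fderiv ℝ φ x‖ + |φ x| * (|α| * dd x ^ (α - 1) * 1) := by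
          apply add_le_add_right
          apply mul_le_mul_of_nonneg_left _ (abs_nonneg _)
          exact mul_le_mul_of_nonneg_left hDle (by positivity)
      _ = |α| * dd x ^ (α - 1) * |φ x| + dd x ^ α * ‖gradient φ x‖ := by
          rw [hgradnorm φ x]
          ring
  -- abbreviations for the integrands
  set g1 : EuclideanSpace ℝ (Fin d) → ℝ := fun x => dd x ^ (-β) * |φ x| ^ p with hg1
  set g2 : EuclideanSpace ℝ (Fin d) → ℝ := fun x => dd x ^ (-β + p) * ‖gradient φ x‖ ^ p with hg2
  set C1 : ℝ := (1 - lam) ^ (1 - p) * |α| ^ p with hC1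
  set C2 : ℝ := lam ^ (1 - p) with hC2
  -- pointwise inequality on Kᶜ
  have hpoint : ∀ x ∈ Kᶜ,
      dd x ^ δ * ‖gradient ψ x‖ ^ p ≤ C1 * g1 x + C2 * g2 x := by
    intro x hx
    have hdx : 0 < dd x := hdpos x hx
    set a : ℝ := |α| * dd x ^ (α - 1) * |φ x| with ha
    set b : ℝ := dd x ^ α * ‖gradient φ x‖ with hb
    have ha0 : 0 ≤ a := by positivity
    have hb0 : 0 ≤ b := by positivity
    have h1 : ‖gradient ψ x‖ ^ p ≤ (a + b) ^ p :=
      Real.rpow_le_rpow (norm_nonneg _) (hgrad_le x hx) hp0.le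
    have h2 : (a + b) ^ p ≤ (1 - lam) ^ (1 - p) * a ^ p + lam ^ (1 - p) * b ^ p :=
      add_rpow_le_convex hp.le hlam0 hlam1 ha0 hb0
    have hrnn1 : 0 ≤ dd x ^ (α - 1) := (Real.rpow_pos_of_pos hdx (α - 1)).le
    have hap : dd x ^ δ * a ^ p = |α| ^ p * g1 x := by
      rw [ha, Real.mul_rpow (mul_nonneg (abs_nonneg _) hrnn1) (abs_nonneg _),
        Real.mul_rpow (abs_nonneg _) hrnn1, ← Real.rpow_mul hdx.le, hg1]
      simp only []
      rw [← he1, Real.rpow_add hdx]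
      ring
    have hbp : dd x ^ δ * b ^ p = g2 x := by
      rw [hb, Real.mul_rpow (Real.rpow_pos_of_pos hdx α).le (norm_nonneg _),
        ← Real.rpow_mul hdx.le, hg2]
      simp only []
      rw [← he2, Real.rpow_add hdx]
      ring
    have hδnn : 0 ≤ dd x ^ δ := (Real.rpow_pos_of_pos hdx δ).le
    calc dd x ^ δ * ‖gradient ψ x‖ ^ p
        ≤ dd x ^ δ * ((1 - lam) ^ (1 - p) * a ^ p + lam ^ (1 - p) * b ^ p) :=
          mul_le_mul_of_nonneg_left (h1.trans h2) hδnn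
      _ = (1 - lam) ^ (1 - p) * (dd x ^ δ * a ^ p) + lam ^ (1 - p) * (dd x ^ δ * b ^ p) := by
          ring
      _ = C1 * g1 x + C2 * g2 x := by
          rw [hap, hbp, hC1, hC2]
          ring
  -- integrability of g1 and g2
  have hgradφcont : Continuous fun x : EuclideanSpace ℝ (Fin d) => gradient φ x := by
    have h1 : Continuous (fderiv ℝ φ) := (contDiff_one_iff_fderiv.1 hφ).2
    exact (LinearIsometryEquiv.continuous _).comp h1
  have habsφ : Continuous fun x : EuclideanSpace ℝ (Fin d) => |φ x| ^ p := by
    apply Continuous.rpow_const (hφ.continuous.abs)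
    exact fun x => Or.inr hp0.le
  have hnormgrad : Continuous fun x : EuclideanSpace ℝ (Fin d) => ‖gradient φ x‖ ^ p := by
    apply Continuous.rpow_const hgradφcont.norm
    exact fun x => Or.inr hp0.le
  have hts1 : tsupport (fun x : EuclideanSpace ℝ (Fin d) => |φ x| ^ p) ⊆ Kᶜ := by
    refine subset_trans (closure_mono ?_) hφs
    intro x hx
    simp only [Function.mem_support] at hx ⊢
    intro h0
    exact hx (by rw [h0, abs_zero, Real.zero_rpow hp0.ne'])
  have hts2 : tsupport (fun x : EuclideanSpace ℝ (Fin d) => ‖gradient φ x‖ ^ p) ⊆ Kᶜ := by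
    refine subset_trans (closure_minimal ?_ (isClosed_tsupport φ)) hφs
    intro x hx
    simp only [Function.mem_support] at hx
    have hgne : gradient φ x ≠ 0 := by
      intro h0
      exact hx (by rw [h0, norm_zero, Real.zero_rpow hp0.ne'])
    have hfne : fderiv ℝ φ x ≠ 0 := by
      intro h0
      apply hgne
      rw [gradient, h0, map_zero]
    exact support_fderiv_subset ℝ (Function.mem_support.2 hfne)
  have hsupp1 : Function.support (fun x : EuclideanSpace ℝ (Fin d) => |φ x| ^ p)
      ⊆ Function.support φ := by
    intro x hx
    simp only [Function.mem_support] at hx ⊢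
    intro h0
    exact hx (by rw [h0, abs_zero, Real.zero_rpow hp0.ne'])
  have hcs1 : HasCompactSupport (fun x : EuclideanSpace ℝ (Fin d) => |φ x| ^ p) :=
    hφc.mono hsupp1
  have hcs2 : HasCompactSupport (fun x : EuclideanSpace ℝ (Fin d) => ‖gradient φ x‖ ^ p) := by
    have h1 : HasCompactSupport (fderiv ℝ φ) := hφc.fderiv ℝ
    have h2 : HasCompactSupport (fun x : EuclideanSpace ℝ (Fin d) => gradient φ x) := by
      have := h1.comp_left (g := (InnerProductSpace.toDual ℝ (EuclideanSpace ℝ (Fin d))).symm)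
        (map_zero _)
      exact this
    exact h2.comp_left (g := fun v => ‖v‖ ^ p) (by simp [Real.zero_rpow hp0.ne'])
  have hint1 : Integrable g1 := by
    rw [hg1, hdd]
    exact integrable_weight K hKne hKcl (-β) _ habsφ hcs1 hts1
  have hint2 : Integrable g2 := by
    rw [hg2, hdd]
    exact integrable_weight K hKne hKcl (-β + p) _ hnormgrad hcs2 hts2
  have hcont1 : Continuous g1 := by
    rw [hg1, hdd]
    exact continuous_weight K hKne hKcl (-β) _ habsφ hts1
  -- numerator inequality
  have hNle : (∫ x in Kᶜ, dd x ^ δ * ‖gradient ψ x‖ ^ p)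
      ≤ C1 * (∫ x in Kᶜ, g1 x) + C2 * (∫ x in Kᶜ, g2 x) := by
    have hgint : IntegrableOn (fun x => C1 * g1 x + C2 * g2 x) Kᶜ :=
      ((hint1.const_mul C1).add (hint2.const_mul C2)).integrableOn
    have hmono : (∫ x in Kᶜ, dd x ^ δ * ‖gradient ψ x‖ ^ p)
        ≤ ∫ x in Kᶜ, (C1 * g1 x + C2 * g2 x) := by
      apply integral_mono_of_nonneg
      · exact Filter.Eventually.of_forall fun x =>
          mul_nonneg (Real.rpow_nonneg infDist_nonneg _) (Real.rpow_nonneg (norm_nonneg _) _)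
      · exact hgint
      · exact (ae_restrict_iff' hmeas).2 (Filter.Eventually.of_forall hpoint)
    calc (∫ x in Kᶜ, dd x ^ δ * ‖gradient ψ x‖ ^ p)
        ≤ ∫ x in Kᶜ, (C1 * g1 x + C2 * g2 x) := hmono
      _ = C1 * (∫ x in Kᶜ, g1 x) + C2 * (∫ x in Kᶜ, g2 x) := by
          rw [integral_add (hint1.const_mul C1).integrableOn (hint2.const_mul C2).integrableOn,
            integral_const_mul, integral_const_mul]
  -- denominator equality
  have hDeq : (∫ x in Kᶜ, dd x ^ (δ - p) * |ψ x| ^ p) = ∫ x in Kᶜ, g1 x := by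
    apply setIntegral_congr_fun hmeas
    intro x hx
    have hdx : 0 < dd x := hdpos x hx
    simp only [hψ, hg1]
    rw [abs_mul, abs_of_pos (Real.rpow_pos_of_pos hdx α),
      Real.mul_rpow (Real.rpow_pos_of_pos hdx α).le (abs_nonneg _),
      ← Real.rpow_mul hdx.le, ← he3, Real.rpow_add hdx]
    ring
  -- positivity of the denominator
  have hDpos : 0 < ∫ x in Kᶜ, g1 x := by
    have hcompl : ∀ x, x ∉ Kᶜ → g1 x = 0 := by
      intro x hx
      have hxK : x ∉ tsupport φ := fun h => hx (hφs h)
      have : φ x = 0 := image_eq_zero_of_notMem_tsupport hxK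
      simp [hg1, this, Real.zero_rpow hp0.ne']
    rw [setIntegral_eq_integral_of_forall_compl_eq_zero hcompl]
    rw [integral_pos_iff_support_of_nonneg
      (fun x => mul_nonneg (Real.rpow_nonneg infDist_nonneg _)
        (Real.rpow_nonneg (abs_nonneg _) _)) hint1]
    obtain ⟨x0, hx0⟩ := Function.ne_iff.1 hφ0
    simp only [Pi.zero_apply] at hx0
    have hx0K : x0 ∈ Kᶜ := hφs (subset_closure (Function.mem_support.2 hx0))
    have hx0g : g1 x0 ≠ 0 := by
      have := hdpos x0 hx0K
      have h1 : (0:ℝ) < dd x0 ^ (-β) := Real.rpow_pos_of_pos this _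
      have h2 : (0:ℝ) < |φ x0| ^ p := Real.rpow_pos_of_pos (abs_pos.2 hx0) _
      simp only [hg1]
      positivity
    exact (hcont1.isOpen_support).measure_pos volume ⟨x0, Function.mem_support.2 hx0g⟩
  -- lower bound for the infimum set
  have hbdd : BddBelow { r : ℝ | ∃ ψ : EuclideanSpace ℝ (Fin d) → ℝ,
      ContDiff ℝ 1 ψ ∧ HasCompactSupport ψ ∧ tsupport ψ ⊆ Kᶜ ∧ ψ ≠ 0 ∧
      r = (∫ x in Kᶜ, dd x ^ δ * ‖gradient ψ x‖ ^ p) /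
          (∫ x in Kᶜ, dd x ^ (δ - p) * |ψ x| ^ p) } := by
    refine ⟨0, ?_⟩
    rintro r ⟨ψ', -, -, -, -, rfl⟩
    apply div_nonneg
    · apply setIntegral_nonneg hmeas
      intro x _
      exact mul_nonneg (Real.rpow_nonneg infDist_nonneg _) (Real.rpow_nonneg (norm_nonneg _) _)
    · apply setIntegral_nonneg hmeas
      intro x _
      exact mul_nonneg (Real.rpow_nonneg infDist_nonneg _) (Real.rpow_nonneg (abs_nonneg _) _)
  have hmem : ((∫ x in Kᶜ, dd x ^ δ * ‖gradient ψ x‖ ^ p) /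
      (∫ x in Kᶜ, dd x ^ (δ - p) * |ψ x| ^ p)) ∈ { r : ℝ | ∃ ψ : EuclideanSpace ℝ (Fin d) → ℝ,
      ContDiff ℝ 1 ψ ∧ HasCompactSupport ψ ∧ tsupport ψ ⊆ Kᶜ ∧ ψ ≠ 0 ∧
      r = (∫ x in Kᶜ, dd x ^ δ * ‖gradient ψ x‖ ^ p) /
          (∫ x in Kᶜ, dd x ^ (δ - p) * |ψ x| ^ p) } :=
    ⟨ψ, hψc1, hψcs, hψts, hψ0, rfl⟩
  refine le_trans (csInf_le hbdd hmem) ?_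
  rw [hDeq]
  have hstep : (∫ x in Kᶜ, dd x ^ δ * ‖gradient ψ x‖ ^ p) / (∫ x in Kᶜ, g1 x)
      ≤ C1 + C2 * ((∫ x in Kᶜ, g2 x) / (∫ x in Kᶜ, g1 x)) := by
    have h2 : (∫ x in Kᶜ, dd x ^ δ * ‖gradient ψ x‖ ^ p) / (∫ x in Kᶜ, g1 x)
        ≤ (C1 * (∫ x in Kᶜ, g1 x) + C2 * (∫ x in Kᶜ, g2 x)) / (∫ x in Kᶜ, g1 x) := by
      gcongr
    have h3 : (C1 * (∫ x in Kᶜ, g1 x) + C2 * (∫ x in Kᶜ, g2 x)) / (∫ x in Kᶜ, g1 x)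
        = C1 + C2 * ((∫ x in Kᶜ, g2 x) / (∫ x in Kᶜ, g1 x)) := by
      field_simp
    rw [h3] at h2
    exact h2
  have hc1 : C1 = (1 - lam) ^ (-(p - 1)) * |(β + δ - p) / p| ^ p := by
    rw [hC1, hα, show (1:ℝ) - p = -(p - 1) by ring,
      show (p - β - δ) / p = -((β + δ - p) / p) by ring, abs_neg]
  have hc2 : C2 = lam ^ (-(p - 1)) := by
    rw [hC2, show (1:ℝ) - p = -(p - 1) by ring]
  rw [hc1, hc2] at hstep
  exact hstep
end
end
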